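/- arXiv:2004.03921 — 5 statements merged into one kernel-verified Lean document; each statement's English description precedes it below -/
import Mathlib

section
/- Let ε ∈ (0,1), δ ∈ (0,1), Δ ≥ 0 and σ > 0 satisfy σ ≥ Δ·√(2·ln(1.25/δ))/ε. Then for any μ, μ' ∈ ℝ with |μ − μ'| ≤ Δ and any measurable set s ⊆ ℝ, the Gaussian measures satisfy gaussianReal μ σ² (s) ≤ e^ε · gaussianReal μ' σ² (s) + δ. (One-dimensional Gaussian mechanism: adding Gaussian noise of standard deviation σ to a real-valued quantity of sensitivity Δ is (ε,δ)-differentially private.) -/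
open MeasureTheory ProbabilityTheory Real Set
open scoped NNReal ENNReal

lemma sqrt_two_pi_ge : (2.5:ℝ) ≤ √(2*π) := by
  rw [show (2.5:ℝ) = √(2.5^2) by rw [Real.sqrt_sq (by norm_num)]]
  apply Real.sqrt_le_sqrt
  nlinarith [Real.pi_gt_d6]

lemma sqrt_two_pi_le : √(2*π) ≤ (2.6:ℝ) := by
  rw [show (2.6:ℝ) = √(2.6^2) by rw [Real.sqrt_sq (by norm_num)]]
  apply Real.sqrt_le_sqrt
  nlinarith [Real.pi_lt_d2]

lemma exp_half_le : rexp (1/2) ≤ 1.6488 := by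
  nlinarith [Real.exp_one_lt_d9, Real.exp_pos (1/2), Real.exp_pos 1,
    sq_nonneg (rexp (1/2) - 1.6488),
    show rexp (1/2) * rexp (1/2) = rexp 1 by rw [← Real.exp_add]; norm_num]

lemma exp_quarter_le : rexp (1/4) ≤ 125/96 := by
  have h4 : rexp (1/4) ^ 4 = rexp 1 := by
    rw [← Real.exp_nat_mul]; norm_num
  nlinarith [Real.exp_one_lt_d9, Real.exp_pos (1/4), sq_nonneg (rexp (1/4)),
    sq_nonneg (rexp (1/4) - 125/96), sq_nonneg (rexp (1/4) + 125/96),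
    sq_nonneg (rexp (1/4)^2 - (125/96)^2)]

lemma exp_fifth_le : rexp (1/5) ≤ 1.25 := by
  have h5 : rexp (1/5) ^ 5 = rexp 1 := by
    rw [← Real.exp_nat_mul]; norm_num
  nlinarith [Real.exp_one_lt_d9, Real.exp_pos (1/5),
    sq_nonneg (rexp (1/5) - 1.25), sq_nonneg (rexp (1/5)^2 - 1.25^2),
    sq_nonneg (rexp (1/5)^2 + 1.25^2), sq_nonneg (rexp (1/5) + 1.25)]

lemma exp_neg_two_ge : (0.052:ℝ) ≤ rexp (-2) / √(2*π) := by
  have he2 : rexp 2 ≤ 7.3891 := by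
    nlinarith [Real.exp_one_lt_d9, Real.exp_pos 1,
      show rexp 1 * rexp 1 = rexp 2 by rw [← Real.exp_add]; norm_num]
  have hp : rexp (-2) = (rexp 2)⁻¹ := by rw [Real.exp_neg]
  have h1 : (0:ℝ) < rexp 2 := Real.exp_pos 2
  have h2 : (0:ℝ) < √(2*π) := by positivity
  rw [hp, div_eq_mul_inv, ← mul_inv, le_inv_comm₀ (by norm_num) (by positivity)]
  calc rexp 2 * √(2*π) ≤ 7.3891 * 2.6 := by
        apply mul_le_mul he2 sqrt_two_pi_le h2.le (by norm_num)
    _ ≤ (0.052:ℝ)⁻¹ := by norm_num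

lemma intOn_xexp {w : ℝ} (hw : 0 < w) {a : ℝ} (ha : 0 < a) :
    IntegrableOn (fun x => x * rexp (-x^2/(2*w))) (Ioi a) volume ∧
    ∫ x in Ioi a, x * rexp (-x^2/(2*w)) = w * rexp (-a^2/(2*w)) := by
  have hderiv : ∀ x ∈ Ici a, HasDerivAt (fun x : ℝ => -w * rexp (-x^2/(2*w)))
      (x * rexp (-x^2/(2*w))) x := by
    intro x _
    have h1 : HasDerivAt (fun x : ℝ => -x^2/(2*w)) (-x/w) x := by
      have := ((hasDerivAt_pow 2 x).neg).div_const (2*w)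
      refine this.congr_deriv ?_
      field_simp
      ring
    have h2 := (h1.exp).const_mul (-w)
    refine h2.congr_deriv ?_
    field_simp
  have hpos : ∀ x ∈ Ioi a, 0 ≤ x * rexp (-x^2/(2*w)) := fun x hx =>
    mul_nonneg (le_of_lt (lt_trans ha hx)) (exp_nonneg _)
  have hlim : Filter.Tendsto (fun x : ℝ => -w * rexp (-x^2/(2*w))) Filter.atTop (nhds 0) := by
    rw [show (0:ℝ) = -w * 0 by ring]
    refine Filter.Tendsto.const_mul _ ?_
    refine Real.tendsto_exp_atBot.comp ?_
    apply Filter.Tendsto.atBot_div_const (by positivity)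
    exact Filter.tendsto_neg_atBot_iff.mpr (Filter.tendsto_pow_atTop (by norm_num : (2:ℕ) ≠ 0))
  constructor
  · exact integrableOn_Ioi_deriv_of_nonneg' hderiv hpos hlim
  · rw [integral_Ioi_of_hasDerivAt_of_nonneg' hderiv hpos hlim]
    ring

lemma tail_bound {w : ℝ≥0} (hw : w ≠ 0) {a : ℝ} (ha : 0 < a) :
    gaussianReal 0 w (Ioi a) ≤
      ENNReal.ofReal ((√(2*π*(w:ℝ)))⁻¹ * ((w:ℝ)/a) * rexp (-a^2/(2*(w:ℝ)))) := by
  have hw' : (0:ℝ) < w := lt_of_le_of_ne w.coe_nonneg (fun h => hw (by exact_mod_cast h.symm))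
  obtain ⟨hint, heval⟩ := intOn_xexp hw' ha
  rw [gaussianReal_apply_eq_integral 0 hw]
  apply ENNReal.ofReal_le_ofReal
  have hle : ∫ x in Ioi a, gaussianPDFReal 0 w x
      ≤ ∫ x in Ioi a, (√(2*π*(w:ℝ)))⁻¹ * a⁻¹ * (x * rexp (-x^2/(2*(w:ℝ)))) := by
    apply setIntegral_mono_on
    · exact (integrable_gaussianPDFReal 0 w).restrict
    · exact (hint.const_mul _)
    · exact measurableSet_Ioi
    · intro x hx
      simp only [gaussianPDFReal, sub_zero]
      have hxa : a ≤ x := le_of_lt hx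
      have hE : (0:ℝ) ≤ rexp (-x^2/(2*(w:ℝ))) := exp_nonneg _
      have hS : (0:ℝ) < √(2*π*(w:ℝ)) := by positivity
      have h1 : (1:ℝ) ≤ a⁻¹ * x := by
        rw [← div_eq_inv_mul, le_div_iff₀ ha]; linarith
      have := mul_le_mul_of_nonneg_right h1 hE
      calc (√(2*π*(w:ℝ)))⁻¹ * rexp (-(x)^2/(2*(w:ℝ)))
          = (√(2*π*(w:ℝ)))⁻¹ * (1 * rexp (-x^2/(2*(w:ℝ)))) := by ring
        _ ≤ (√(2*π*(w:ℝ)))⁻¹ * (a⁻¹ * x * rexp (-x^2/(2*(w:ℝ)))) := by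
            apply mul_le_mul_of_nonneg_left _ (by positivity)
            simpa using this
        _ = (√(2*π*(w:ℝ)))⁻¹ * a⁻¹ * (x * rexp (-x^2/(2*(w:ℝ)))) := by ring
  rw [MeasureTheory.integral_const_mul, heval] at hle
  calc ∫ x in Ioi a, gaussianPDFReal 0 w x
      ≤ (√(2*π*(w:ℝ)))⁻¹ * a⁻¹ * ((w:ℝ) * rexp (-a^2/(2*(w:ℝ)))) := hle
    _ = (√(2*π*(w:ℝ)))⁻¹ * ((w:ℝ)/a) * rexp (-a^2/(2*(w:ℝ))) := by ring

lemma gauss_symm {w : ℝ≥0} : gaussianReal 0 w (Iio (0:ℝ)) = gaussianReal 0 w (Ioi (0:ℝ)) := by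
  have hmap := gaussianReal_map_const_mul (μ := 0) (v := w) (-1)
  have hmap' : Measure.map (fun x : ℝ => -1 * x) (gaussianReal 0 w) = gaussianReal 0 w := by
    rw [hmap]
    congr 1
    · ring
    · ext
      push_cast
      norm_num
  conv_lhs => rw [← hmap']
  rw [Measure.map_apply (by fun_prop) measurableSet_Iio]
  congr 1
  ext x
  simp

lemma half_bound {w : ℝ≥0} {a : ℝ} (ha : 0 ≤ a) :
    gaussianReal 0 w (Ioi a) ≤ 1/2 := by
  have h1 : gaussianReal 0 w (Ioi a) ≤ gaussianReal 0 w (Ioi 0) :=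
    measure_mono (Ioi_subset_Ioi ha)
  have h2 : gaussianReal 0 w (Ioi 0) + gaussianReal 0 w (Ioi 0) ≤ 1 := by
    nth_rewrite 2 [← gauss_symm]
    rw [← measure_union (by rw [Set.disjoint_left]; intro x hx hx'; exact absurd (show x < 0 from hx') (not_lt.mpr (show (0:ℝ) < x from hx).le)) measurableSet_Iio]
    exact le_trans (measure_mono (subset_univ _)) (by simp)
  refine le_trans h1 ?_
  rw [ENNReal.le_div_iff_mul_le (by simp) (by simp), mul_comm, two_mul]
  exact h2

lemma lower_bound {w : ℝ≥0} (hw : w ≠ 0) :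
    gaussianReal 0 w (Ioi (-Real.sqrt w)) ≤ ENNReal.ofReal (1 - rexp (-2) / √(2*π)) := by
  have hw' : (0:ℝ) < w := lt_of_le_of_ne w.coe_nonneg (fun h => hw (by exact_mod_cast h.symm))
  have hsw : (0:ℝ) < Real.sqrt w := Real.sqrt_pos.mpr hw'
  set q : ℝ := rexp (-2) / √(2*π) with hq
  have hq0 : 0 ≤ q := by positivity
  have hIcc : ENNReal.ofReal q ≤ gaussianReal 0 w (Icc (-2*√w) (-√w)) := by
    rw [gaussianReal_apply_eq_integral 0 hw]
    apply ENNReal.ofReal_le_ofReal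
    have hlow : ∀ x ∈ Icc (-2*√(w:ℝ)) (-√(w:ℝ)),
        (√(2*π*(w:ℝ)))⁻¹ * rexp (-2) ≤ gaussianPDFReal 0 w x := by
      intro x hx
      simp only [gaussianPDFReal, sub_zero]
      apply mul_le_mul_of_nonneg_left _ (by positivity)
      apply Real.exp_le_exp.mpr
      rw [le_div_iff₀ (by positivity : (0:ℝ) < 2*(w:ℝ))]
      have h1 : -2*√(w:ℝ) ≤ x := hx.1
      have h2 : x ≤ -√(w:ℝ) := hx.2
      have hx2 : x^2 ≤ 4*(w:ℝ) := by
        have hs2 : √(w:ℝ)^2 = (w:ℝ) := Real.sq_sqrt w.coe_nonneg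
        nlinarith
      nlinarith
    have hint : ∫ x in Icc (-2*√(w:ℝ)) (-√(w:ℝ)), gaussianPDFReal 0 w x
        ≥ ∫ _x in Icc (-2*√(w:ℝ)) (-√(w:ℝ)), (√(2*π*(w:ℝ)))⁻¹ * rexp (-2) := by
      apply setIntegral_mono_on
      · exact integrableOn_const (by rw [Real.volume_Icc]; exact ENNReal.ofReal_ne_top)
      · exact (integrable_gaussianPDFReal 0 w).restrict
      · exact measurableSet_Icc
      · exact hlow
    rw [setIntegral_const, measureReal_def, Real.volume_Icc] at hint
    have hvol : (ENNReal.ofReal (-√(w:ℝ) - -2*√(w:ℝ))).toReal = √(w:ℝ) := by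
      rw [ENNReal.toReal_ofReal (by linarith)]; ring
    rw [hvol] at hint
    have hsqrt : √(2*π*(w:ℝ)) = √(2*π) * √(w:ℝ) := Real.sqrt_mul (by positivity) _
    calc q = √(w:ℝ) * ((√(2*π*(w:ℝ)))⁻¹ * rexp (-2)) := by
            rw [hsqrt, hq]; field_simp
      _ ≤ _ := hint
  have hdisj : Disjoint (Ioi (-√(w:ℝ))) (Icc (-2*√(w:ℝ)) (-√(w:ℝ))) := by
    rw [Set.disjoint_left]; intro x h1 h2
    exact absurd h2.2 (not_le.mpr h1)
  have hsum : gaussianReal 0 w (Ioi (-√(w:ℝ))) + gaussianReal 0 w (Icc (-2*√(w:ℝ)) (-√(w:ℝ))) ≤ 1 := by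
    rw [← measure_union hdisj measurableSet_Icc]
    exact le_trans (measure_mono (subset_univ _)) (by simp)
  have h1q : ENNReal.ofReal (1 - q) = 1 - ENNReal.ofReal q := by
    rw [← ENNReal.ofReal_one, ← ENNReal.ofReal_sub _ hq0]
  rw [h1q]
  have := le_trans (add_le_add_right hIcc _) hsum
  exact ENNReal.le_sub_of_add_le_right (by simp) this

lemma gauss_shift (m u : ℝ) (w : ℝ≥0) :
    gaussianReal m w (Ioi (m + u)) = gaussianReal 0 w (Ioi u) := by
  have hmap := gaussianReal_map_add_const (μ := 0) (v := w) m
  rw [zero_add] at hmap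
  rw [← hmap, Measure.map_apply (measurable_add_const _) measurableSet_Ioi]
  congr 1
  ext x
  simp only [mem_preimage, mem_Ioi]
  constructor <;> intro h <;> linarith

lemma gauss_reduce (μ : ℝ) (v : ℝ≥0) (c a : ℝ) :
    gaussianReal μ v {x | a < c * (x - μ)} =
      gaussianReal 0 (⟨c^2, sq_nonneg _⟩ * v) (Ioi a) := by
  have hset : {x : ℝ | a < c * (x - μ)} = (fun x => c * x)⁻¹' (Ioi (c * μ + a)) := by
    ext x
    simp only [mem_setOf_eq, mem_preimage, mem_Ioi, mul_sub]
    constructor <;> intro h <;> linarith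
  rw [hset, ← Measure.map_apply (measurable_const_mul c) measurableSet_Ioi,
    gaussianReal_map_const_mul]
  exact gauss_shift (c * μ) a _

lemma pdf_ratio {μ μ' : ℝ} {v : ℝ≥0} {ε a : ℝ}
    (hv : (0:ℝ) < v) (ha : 2 * a + (μ - μ')^2 ≤ 2 * ε * v)
    {x : ℝ} (hx : (μ - μ') * (x - μ) ≤ a) :
    gaussianPDFReal μ v x ≤ rexp ε * gaussianPDFReal μ' v x := by
  simp only [gaussianPDFReal]
  have h2v : (0:ℝ) < 2*(v:ℝ) := by positivity
  have key : rexp (-(x - μ)^2 / (2*(v:ℝ))) ≤ rexp ε * rexp (-(x - μ')^2 / (2*(v:ℝ))) := by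
    rw [← Real.exp_add, Real.exp_le_exp, ← sub_le_iff_le_add, div_sub_div_same,
      div_le_iff₀ h2v]
    nlinarith [sq_nonneg (x - μ)]
  calc (√(2*π*(v:ℝ)))⁻¹ * rexp (-(x - μ)^2 / (2*(v:ℝ)))
      ≤ (√(2*π*(v:ℝ)))⁻¹ * (rexp ε * rexp (-(x - μ')^2 / (2*(v:ℝ)))) :=
        mul_le_mul_of_nonneg_left key (by positivity)
    _ = rexp ε * ((√(2*π*(v:ℝ)))⁻¹ * rexp (-(x - μ')^2 / (2*(v:ℝ)))) := by ring

lemma key_a (ε δ Δ σ k : ℝ) (hε0 : 0 < ε) (hε1 : ε < 1) (hδ0 : 0 < δ) (hδ1 : δ < 1)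
    (hk0 : 0 < k) (hkΔ : k ≤ Δ) (hσ : 0 < σ)
    (hcal : σ ≥ Δ * Real.sqrt (2 * Real.log (1.25 / δ)) / ε) :
    (√(2 * Real.log (1.25/δ)) - 1/(2*√(2 * Real.log (1.25/δ)))) * (k*σ)
      ≤ ε*σ^2 - k^2/2 := by
  have hL : 0 < Real.log (1.25/δ) := Real.log_pos (by rw [lt_div_iff₀ hδ0]; linarith)
  set x₀ := √(2 * Real.log (1.25/δ)) with hx₀def
  have hx₀ : 0 < x₀ := Real.sqrt_pos.mpr (by linarith)
  have hεσ : Δ * x₀ ≤ ε * σ := by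
    rw [ge_iff_le, div_le_iff₀ hε0] at hcal
    linarith [hcal]
  have hkx : k * x₀ ≤ σ := by
    have h1 : k * x₀ ≤ Δ * x₀ := mul_le_mul_of_nonneg_right hkΔ hx₀.le
    nlinarith
  have hkxΔ : k * x₀ ≤ ε * σ := le_trans (mul_le_mul_of_nonneg_right hkΔ hx₀.le) hεσ
  have h1 : x₀ * (k * σ) ≤ ε * σ^2 := by nlinarith [mul_le_mul_of_nonneg_right hkxΔ hσ.le]
  have h2 : k^2/2 ≤ (1/(2*x₀)) * (k*σ) := by
    rw [div_le_iff₀ (by norm_num : (0:ℝ) < 2)]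
    have : k * k ≤ k * (σ / x₀) := by
      apply mul_le_mul_of_nonneg_left _ hk0.le
      rw [le_div_iff₀ hx₀]; linarith [hkx]
    calc k^2 = k * k := sq k
      _ ≤ k * (σ/x₀) := this
      _ = 1/(2*x₀) * (k*σ) * 2 := by field_simp
  nlinarith [h1, h2]

lemma case1_bound (δ sw a : ℝ) (hδ0 : 0 < δ) (hδ58 : δ ≤ 5/8) (hsw : 0 < sw)
    (ht : (√(2 * Real.log (1.25/δ)) - 1/(2*√(2 * Real.log (1.25/δ)))) * sw ≤ a) :
    0 < a ∧ (√(2*π*sw^2))⁻¹ * (sw^2/a) * rexp (-a^2/(2*sw^2)) ≤ δ := by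
  have hL : Real.log 2 ≤ Real.log (1.25/δ) := by
    apply Real.log_le_log (by norm_num)
    rw [le_div_iff₀ hδ0]; linarith
  have hlog2 : (0.6931:ℝ) ≤ Real.log 2 := by linarith [Real.log_two_gt_d9]
  set L := Real.log (1.25/δ) with hLdef
  have hL0 : (0:ℝ) < L := by linarith
  set x₀ := √(2 * L) with hx₀def
  have hx₀sq : x₀^2 = 2*L := Real.sq_sqrt (by linarith)
  have hx₀pos : 0 < x₀ := Real.sqrt_pos.mpr (by linarith)
  have hx₀ge : (1.17:ℝ) ≤ x₀ := by nlinarith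
  set t₀ := x₀ - 1/(2*x₀) with ht₀def
  have ht₀ : (0.74:ℝ) ≤ t₀ := by
    have hinv : 1/(2*x₀) ≤ 1/(2*1.17) :=
      one_div_le_one_div_of_le (by norm_num) (by linarith)
    have hnum : (1:ℝ)/(2*1.17) ≤ 0.4274 := by norm_num
    rw [ht₀def]; linarith
  have ha : 0.74 * sw ≤ a :=
    le_trans (mul_le_mul_of_nonneg_right ht₀ hsw.le) ht
  have ha0 : 0 < a := by nlinarith
  refine ⟨ha0, ?_⟩
  have hasq : (2*L - 1) * sw^2 ≤ a^2 := by
    have h1 : t₀ * sw ≤ a := ht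
    have h2 : 0 ≤ t₀ * sw := mul_nonneg (le_trans (by norm_num : (0:ℝ) ≤ 0.74) ht₀) hsw.le
    have h3 : t₀^2 * sw^2 ≤ a^2 := by nlinarith
    have h4 : 2*L - 1 ≤ t₀^2 := by
      have : t₀^2 = x₀^2 - 1 + 1/(4*x₀^2) := by
        rw [ht₀def]; field_simp; ring
      rw [this, hx₀sq]
      have hpos : (0:ℝ) < 1/(4*(2*L)) := by positivity
      linarith
    nlinarith [sq_nonneg sw]
  -- exponential bound
  have hexp : rexp (-a^2/(2*sw^2)) ≤ 1.6488 * (δ/1.25) := by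
    have h1 : -a^2/(2*sw^2) ≤ 1/2 - L := by
      rw [div_le_iff₀ (by positivity)]
      nlinarith
    calc rexp (-a^2/(2*sw^2)) ≤ rexp (1/2 - L) := Real.exp_le_exp.mpr h1
      _ = rexp (1/2) * rexp (-L) := by rw [← Real.exp_add]; ring_nf
      _ = rexp (1/2) * (δ/1.25) := by
          rw [hLdef, ← Real.log_inv, Real.exp_log (by positivity)]
          norm_num
      _ ≤ 1.6488 * (δ/1.25) := by
          apply mul_le_mul_of_nonneg_right exp_half_le (by positivity)
  -- prefactor bound
  have hpre : (√(2*π*sw^2))⁻¹ * (sw^2/a) ≤ 1/(2.5 * 0.74) := by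
    have hsqrt : √(2*π*sw^2) = √(2*π) * sw := by
      rw [Real.sqrt_mul (by positivity), Real.sqrt_sq hsw.le]
    rw [hsqrt, mul_inv, mul_assoc]
    have h2 : sw⁻¹ * (sw^2/a) = sw/a := by field_simp
    rw [h2]
    have h3 : (√(2*π))⁻¹ ≤ 1/2.5 := by
      rw [← one_div]
      exact one_div_le_one_div_of_le (by norm_num) sqrt_two_pi_ge
    have h4 : sw/a ≤ 1/0.74 := by
      rw [div_le_div_iff₀ ha0 (by norm_num)]; linarith
    calc (√(2*π))⁻¹ * (sw/a) ≤ (1/2.5) * (1/0.74) := by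
          apply mul_le_mul h3 h4 (by positivity) (by norm_num)
      _ ≤ 1/(2.5*0.74) := by norm_num
  have hfin : (√(2*π*sw^2))⁻¹ * (sw^2/a) * rexp (-a^2/(2*sw^2))
      ≤ (1/(2.5*0.74)) * (1.6488 * (δ/1.25)) := by
    apply mul_le_mul hpre hexp (Real.exp_nonneg _) (by norm_num)
  norm_num at hfin ⊢; linarith [hfin, hδ0.le]

lemma case2_t_nonneg (δ : ℝ) (hδ0 : 0 < δ) (hδ96 : δ ≤ 24/25) :
    0 ≤ √(2 * Real.log (1.25/δ)) - 1/(2*√(2 * Real.log (1.25/δ))) := by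
  have hq : (1/4 : ℝ) ≤ Real.log (1.25/δ) := by
    calc (1/4 : ℝ) = Real.log (rexp (1/4)) := (Real.log_exp _).symm
      _ ≤ Real.log (125/96) := Real.log_le_log (Real.exp_pos _) exp_quarter_le
      _ ≤ Real.log (1.25/δ) := by
          apply Real.log_le_log (by norm_num)
          rw [div_le_div_iff₀ (by norm_num) hδ0]
          linarith
  set x₀ := √(2 * Real.log (1.25/δ)) with hx₀def
  have hx₀sq : x₀^2 = 2 * Real.log (1.25/δ) := Real.sq_sqrt (by linarith)
  have hx₀pos : 0 < x₀ := Real.sqrt_pos.mpr (by linarith)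
  rw [sub_nonneg, div_le_iff₀ (by positivity)]
  nlinarith

lemma case3_t_ge (δ : ℝ) (hδ0 : 0 < δ) (hδ1 : δ < 1) :
    -1 ≤ √(2 * Real.log (1.25/δ)) - 1/(2*√(2 * Real.log (1.25/δ))) := by
  have hq : (1/5 : ℝ) ≤ Real.log (1.25/δ) := by
    calc (1/5 : ℝ) = Real.log (rexp (1/5)) := (Real.log_exp _).symm
      _ ≤ Real.log 1.25 := Real.log_le_log (Real.exp_pos _) exp_fifth_le
      _ ≤ Real.log (1.25/δ) := by
          apply Real.log_le_log (by norm_num)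
          rw [le_div_iff₀ hδ0]
          nlinarith
  set x₀ := √(2 * Real.log (1.25/δ)) with hx₀def
  have hx₀sq : x₀^2 = 2 * Real.log (1.25/δ) := Real.sq_sqrt (by linarith)
  have hx₀pos : 0 < x₀ := Real.sqrt_pos.mpr (by linarith)
  have hx₀ge : (0.63:ℝ) ≤ x₀ := by nlinarith
  have hinv : 1/(2*x₀) ≤ 1/(2*0.63) :=
    one_div_le_one_div_of_le (by norm_num) (by linarith)
  have : (1:ℝ)/(2*0.63) ≤ 0.7937 := by norm_num
  linarith


lemma bad_bound (ε δ Δ σ c : ℝ) (hε0 : 0 < ε) (hε1 : ε < 1) (hδ0 : 0 < δ) (hδ1 : δ < 1)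
    (hσ : 0 < σ) (hc : c ≠ 0) (hcΔ : |c| ≤ Δ)
    (hcal : σ ≥ Δ * Real.sqrt (2 * Real.log (1.25 / δ)) / ε)
    (w : ℝ≥0) (hw : (w:ℝ) = c^2 * σ^2) :
    gaussianReal 0 w (Ioi (ε*σ^2 - c^2/2)) ≤ ENNReal.ofReal δ := by
  set k := |c| with hk
  have hk0 : 0 < k := abs_pos.mpr hc
  have hsw : 0 < k * σ := by positivity
  have hwne : w ≠ 0 := by
    intro h
    rw [h] at hw
    simp only [NNReal.coe_zero] at hw
    nlinarith [pow_pos hk0 2, pow_pos hσ 2, sq_abs c]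
  have hsw2 : (w:ℝ) = (k*σ)^2 := by rw [hw, hk, mul_pow, sq_abs]
  have hsqw : √(w:ℝ) = k*σ := by rw [hsw2, Real.sqrt_sq hsw.le]
  have hkey : (√(2 * Real.log (1.25/δ)) - 1/(2*√(2 * Real.log (1.25/δ)))) * (k*σ)
      ≤ ε*σ^2 - c^2/2 := by
    have h := key_a ε δ Δ σ k hε0 hε1 hδ0 hδ1 hk0 hcΔ hσ hcal
    have hc2 : c^2 = k^2 := (sq_abs c).symm
    rw [hc2]
    exact h
  rcases le_or_gt δ (5/8) with h58 | h58
  · obtain ⟨ha0, hb⟩ := case1_bound δ (k*σ) (ε*σ^2 - c^2/2) hδ0 h58 hsw hkey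
    calc gaussianReal 0 w (Ioi (ε*σ^2 - c^2/2))
        ≤ ENNReal.ofReal ((√(2*π*(w:ℝ)))⁻¹ * ((w:ℝ)/(ε*σ^2 - c^2/2))
            * rexp (-(ε*σ^2 - c^2/2)^2/(2*(w:ℝ)))) := tail_bound hwne ha0
      _ ≤ ENNReal.ofReal δ := by
          rw [hsw2]
          exact ENNReal.ofReal_le_ofReal hb
  · rcases le_or_gt δ (24/25) with h96 | h96
    · have ht0 := case2_t_nonneg δ hδ0 h96
      have ha0 : 0 ≤ ε*σ^2 - c^2/2 := le_trans (mul_nonneg ht0 hsw.le) hkey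
      calc gaussianReal 0 w (Ioi (ε*σ^2 - c^2/2)) ≤ 1/2 := half_bound ha0
        _ ≤ ENNReal.ofReal δ := by
            have h12 : (1/2 : ℝ≥0∞) = ENNReal.ofReal (1/2) := by
              rw [ENNReal.ofReal_div_of_pos (by norm_num)]
              norm_num
            rw [h12]
            exact ENNReal.ofReal_le_ofReal (by linarith)
    · have ht1 := case3_t_ge δ hδ0 hδ1
      have ham : -(k*σ) ≤ ε*σ^2 - c^2/2 := by nlinarith [hkey, hsw]
      calc gaussianReal 0 w (Ioi (ε*σ^2 - c^2/2))
          ≤ gaussianReal 0 w (Ioi (-(k*σ))) := measure_mono (Ioi_subset_Ioi ham)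
        _ = gaussianReal 0 w (Ioi (-√(w:ℝ))) := by rw [hsqw]
        _ ≤ ENNReal.ofReal (1 - rexp (-2)/√(2*π)) := lower_bound hwne
        _ ≤ ENNReal.ofReal δ := ENNReal.ofReal_le_ofReal (by linarith [exp_neg_two_ge])

/-- One-dimensional Gaussian mechanism: adding Gaussian noise of standard deviation `σ`
to a real-valued quantity of sensitivity `Δ` is `(ε, δ)`-differentially private. -/
theorem gaussian_mechanism_one_dim
    (ε δ Δ σ : ℝ) (hε : ε ∈ Set.Ioo (0 : ℝ) 1) (hδ : δ ∈ Set.Ioo (0 : ℝ) 1)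
    (hΔ : 0 ≤ Δ) (hσ : 0 < σ)
    (hcal : σ ≥ Δ * Real.sqrt (2 * Real.log (1.25 / δ)) / ε)
    (μ μ' : ℝ) (hadj : |μ - μ'| ≤ Δ)
    (s : Set ℝ) (hs : MeasurableSet s) :
    gaussianReal μ (σ ^ 2).toNNReal s
      ≤ ENNReal.ofReal (Real.exp ε) * gaussianReal μ' (σ ^ 2).toNNReal s
        + ENNReal.ofReal δ := by
  obtain ⟨hε0, hε1⟩ := hε
  obtain ⟨hδ0, hδ1⟩ := hδ
  set v : ℝ≥0 := (σ^2).toNNReal with hvdef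
  have hv : (v:ℝ) = σ^2 := Real.coe_toNNReal _ (sq_nonneg σ)
  have hvne : v ≠ 0 := by
    simp only [hvdef, ne_eq, Real.toNNReal_eq_zero, not_le]
    positivity
  have hvpos : (0:ℝ) < v := by rw [hv]; positivity
  set c := μ - μ' with hcdef
  set a := ε*σ^2 - c^2/2 with hadef
  set B := {x : ℝ | a < c * (x - μ)} with hBdef
  have hBmeas : MeasurableSet B := by
    have hB : B = (fun x => c * (x - μ)) ⁻¹' (Ioi a) := rfl
    rw [hB]
    exact measurableSet_Ioi.preimage (by fun_prop)
  have hsplit : gaussianReal μ v s ≤ gaussianReal μ v (s ∩ Bᶜ) + gaussianReal μ v B := by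
    refine le_trans (measure_mono ?_) (measure_union_le _ _)
    intro x hx
    by_cases hb : x ∈ B
    · exact Or.inr hb
    · exact Or.inl ⟨hx, hb⟩
  have hmain : gaussianReal μ v (s ∩ Bᶜ) ≤ ENNReal.ofReal (rexp ε) * gaussianReal μ' v s := by
    rw [gaussianReal_apply _ hvne, gaussianReal_apply _ hvne]
    have harel : 2*a + (μ - μ')^2 ≤ 2*ε*(v:ℝ) := le_of_eq (by rw [hv, hadef, hcdef]; ring)
    have h1 : ∫⁻ x in s ∩ Bᶜ, gaussianPDF μ v x
        ≤ ∫⁻ x in s ∩ Bᶜ, ENNReal.ofReal (rexp ε) * gaussianPDF μ' v x := by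
      refine setLIntegral_mono ((measurable_gaussianPDF _ _).const_mul _) ?_
      intro x hx
      have hxB : c * (x - μ) ≤ a := not_lt.mp hx.2
      rw [gaussianPDF, gaussianPDF, ← ENNReal.ofReal_mul (Real.exp_nonneg ε)]
      exact ENNReal.ofReal_le_ofReal (pdf_ratio hvpos harel (by rw [← hcdef]; exact hxB))
    refine h1.trans ?_
    rw [lintegral_const_mul _ (measurable_gaussianPDF _ _)]
    exact mul_le_mul_right (lintegral_mono_set inter_subset_left) _
  have hbad : gaussianReal μ v B ≤ ENNReal.ofReal δ := by
    by_cases hc : c = 0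
    · have ha0 : 0 < a := by
        rw [hadef, hc]
        nlinarith [mul_pos hε0 (pow_pos hσ 2)]
      have hB0 : B = ∅ := by
        ext x
        simp only [hBdef, hc, zero_mul, mem_setOf_eq, mem_empty_iff_false, iff_false, not_lt]
        linarith
      rw [hB0]
      simp
    · rw [hBdef, hadef, gauss_reduce μ v c (ε*σ^2 - c^2/2)]
      refine bad_bound ε δ Δ σ c hε0 hε1 hδ0 hδ1 hσ hc hadj hcal _ ?_
      push_cast
      change c^2 * (v:ℝ) = c^2 * σ^2
      rw [hv]
  calc gaussianReal μ v s ≤ gaussianReal μ v (s ∩ Bᶜ) + gaussianReal μ v B := hsplit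
    _ ≤ ENNReal.ofReal (rexp ε) * gaussianReal μ' v s + ENNReal.ofReal δ :=
        add_le_add hmain hbad
end

section
/- Fix a finite line set L, for each line ℓ ∈ L a downstream set D_ℓ ⊆ L, and a generator dispatch g : L → ℝ. For loads d : L → ℝ define the active power flow f_ℓ(d) = d_ℓ − g_ℓ + Σ_{i∈D_ℓ} (d_i − g_i). Let ε ∈ (0,1), δ ∈ (0,1), β > 0, σ > 0 with σ ≥ β·√(2·ln(1.25/δ))/ε, and let d, d' : L → ℝ be two load vectors that agree except in one coordinate i where |d_i − d'_i| ≤ β. Then for every line ℓ ∈ L and every measurable set s ⊆ ℝ, gaussianReal (f_ℓ(d)) σ² (s) ≤ e^ε · gaussianReal (f_ℓ(d')) σ² (s) + δ. (Privacy guarantee: the randomized power flow release on any line is (ε,δ)-differentially private for β-adjacent load datasets.) -/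
section DPHelpers

open MeasureTheory ProbabilityTheory Real Set
open scoped NNReal ENNReal

variable {m : ℝ} {v : ℝ≥0}

lemma gauss_refl (m : ℝ) (v : ℝ≥0) :
    (gaussianReal m v).map (fun x => 2*m - x) = gaussianReal m v := by
  have h1 : (fun x : ℝ => 2*m - x) = (fun x => x + 2*m) ∘ (fun x => (-1) * x) := by
    ext x; simp; ring
  rw [h1, ← Measure.map_map (by fun_prop) (by fun_prop),
    gaussianReal_map_const_mul, gaussianReal_map_add_const]
  congr 1
  · ring
  · ext : 1; push_cast; norm_num

lemma gauss_Iic_eq_Ici (m k : ℝ) (v : ℝ≥0) :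
    gaussianReal m v (Iic (m - k)) = gaussianReal m v (Ici (m + k)) := by
  conv_lhs => rw [← gauss_refl m v]
  rw [Measure.map_apply (by fun_prop) measurableSet_Iic]
  congr 1
  ext x
  simp only [mem_preimage, mem_Iic, mem_Ici]
  constructor <;> intro h <;> linarith

lemma gauss_Ici_self (m : ℝ) (v : ℝ≥0) (hv : v ≠ 0) :
    gaussianReal m v (Ici m) = 1/2 := by
  have hIic : gaussianReal m v (Iic m) = gaussianReal m v (Ici m) := by
    have := gauss_Iic_eq_Ici m 0 v
    simpa using this
  have hsingle : gaussianReal m v {m} = 0 :=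
    (gaussianReal_absolutelyContinuous m hv) (volume_singleton)
  have hIoi : gaussianReal m v (Ioi m) = gaussianReal m v (Ici m) := by
    have : Ici m = {m} ∪ Ioi m := by
      ext x; simp [mem_Ici, mem_Ioi, le_iff_lt_or_eq]
    rw [this, measure_union _ measurableSet_Ioi, hsingle, zero_add]
    simp [Set.disjoint_left]
  have huniv : gaussianReal m v (Iic m) + gaussianReal m v (Ioi m) = 1 := by
    rw [← measure_union (Iic_disjoint_Ioi le_rfl) measurableSet_Ioi, Iic_union_Ioi,
      measure_univ]
  rw [hIic, hIoi] at huniv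
  have h2 : (2 : ℝ≥0∞) * gaussianReal m v (Ici m) = 1 := by rw [two_mul]; exact huniv
  rw [ENNReal.eq_div_iff (by norm_num) (by norm_num)]
  rw [mul_comm] at h2 ⊢
  exact h2

lemma gauss_set_le (m : ℝ) (v : ℝ≥0) (hv : v ≠ 0) (A : Set ℝ) :
    gaussianReal m v A ≤ ENNReal.ofReal (√(2*π*v))⁻¹ * volume A := by
  rw [gaussianReal_apply m hv A]
  calc ∫⁻ x in A, gaussianPDF m v x
      ≤ ∫⁻ _ in A, ENNReal.ofReal (√(2*π*v))⁻¹ := by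
        refine setLIntegral_mono (by fun_prop) (fun x _ => ?_)
        rw [gaussianPDF, gaussianPDFReal]
        refine ENNReal.ofReal_le_ofReal ?_
        have h1 : rexp (-(x-m)^2/(2*v)) ≤ 1 := by
          rw [Real.exp_le_one_iff]
          have hv' : (0:ℝ) ≤ (v:ℝ) := v.2
          apply div_nonpos_of_nonpos_of_nonneg (by nlinarith [sq_nonneg (x-m)]) (by positivity)
        nlinarith [inv_nonneg.2 (Real.sqrt_nonneg (2*π*v))]
    _ = ENNReal.ofReal (√(2*π*v))⁻¹ * volume A := by
        rw [setLIntegral_const]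

lemma gauss_tail (m k : ℝ) (v : ℝ≥0) (hv : v ≠ 0) (hk : 0 ≤ k) :
    gaussianReal m v (Ici (m+k)) ≤ ENNReal.ofReal (rexp (-k^2/(2*v)) / 2) := by
  have hvpos : (0:ℝ) < (v:ℝ) := by positivity
  rw [gaussianReal_apply m hv]
  have step : ∀ x ∈ Ici (m+k),
      gaussianPDF m v x ≤ ENNReal.ofReal (rexp (-k^2/(2*v))) * gaussianPDF (m+k) v x := by
    intro x hx
    rw [gaussianPDF, gaussianPDF, ← ENNReal.ofReal_mul (Real.exp_nonneg _)]
    refine ENNReal.ofReal_le_ofReal ?_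
    rw [gaussianPDFReal, gaussianPDFReal]
    have hx' : m + k ≤ x := hx
    have key : rexp (-(x-m)^2/(2*(v:ℝ))) ≤ rexp (-k^2/(2*(v:ℝ))) * rexp (-(x-(m+k))^2/(2*(v:ℝ))) := by
      rw [← Real.exp_add, Real.exp_le_exp, ← add_div, div_le_div_iff_of_pos_right (by positivity)]
      nlinarith
    have hC : (0:ℝ) ≤ (√(2*π*(v:ℝ)))⁻¹ := by positivity
    calc (√(2*π*(v:ℝ)))⁻¹ * rexp (-(x-m)^2/(2*(v:ℝ)))
        ≤ (√(2*π*(v:ℝ)))⁻¹ * (rexp (-k^2/(2*(v:ℝ))) * rexp (-(x-(m+k))^2/(2*(v:ℝ)))) :=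
          mul_le_mul_of_nonneg_left key hC
      _ = rexp (-k^2/(2*(v:ℝ))) * ((√(2*π*(v:ℝ)))⁻¹ * rexp (-(x-(m+k))^2/(2*(v:ℝ)))) := by ring
  calc ∫⁻ x in Ici (m+k), gaussianPDF m v x
      ≤ ∫⁻ x in Ici (m+k), ENNReal.ofReal (rexp (-k^2/(2*v))) * gaussianPDF (m+k) v x :=
        setLIntegral_mono ((measurable_gaussianPDF _ _).const_mul _) step
    _ = ENNReal.ofReal (rexp (-k^2/(2*v))) * gaussianReal (m+k) v (Ici (m+k)) := by
        rw [lintegral_const_mul _ (measurable_gaussianPDF _ _), gaussianReal_apply _ hv]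
    _ = ENNReal.ofReal (rexp (-k^2/(2*v)) / 2) := by
        rw [gauss_Ici_self _ _ hv]
        rw [ENNReal.ofReal_div_of_pos (by norm_num)]
        congr 1
        · simp [ENNReal.ofReal_ofNat]


lemma exp_half_lt : rexp (1/2) < 5/2 := by
  have h := Real.exp_one_lt_d9
  have h2 : rexp (1/2) * rexp (1/2) = rexp 1 := by rw [← Real.exp_add]; norm_num
  nlinarith [Real.exp_pos (1/2)]

lemma log_125 : (1/5 : ℝ) ≤ Real.log 1.25 := by
  have h := Real.log_le_sub_one_of_pos (show (0:ℝ) < 0.8 by norm_num)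
  have : Real.log 1.25 = - Real.log 0.8 := by
    rw [← Real.log_inv]; norm_num
  rw [this]; linarith

lemma sqrt_aux {w : ℝ} (h0 : 0 < w) (h2 : (12/5:ℝ) ≤ w^2) : (8/7:ℝ) ≤ w := by
  nlinarith

section
variable {ε δ β σ : ℝ} (hε : ε ∈ Set.Ioo (0:ℝ) 1) (hδ : δ ∈ Set.Ioo (0:ℝ) 1)
  (hβ : 0 < β) (hσ : 0 < σ)
  (hcal : σ ≥ β * Real.sqrt (2 * Real.log (1.25 / δ)) / ε)

include hε hδ hβ hσ hcal in
lemma realA (hk : 0 ≤ σ^2*ε/β - β/2) : rexp (-(σ^2*ε/β - β/2)^2/(2*σ^2))/2 ≤ δ := by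
  obtain ⟨hε0, hε1⟩ := hε
  obtain ⟨hδ0, hδ1⟩ := hδ
  set L := Real.log (1.25/δ) with hLdef
  clear_value L
  have hL : 0 < L := by rw [hLdef]; exact Real.log_pos (by rw [lt_div_iff₀ hδ0]; linarith)
  set c := Real.sqrt (2*L) with hcdef
  clear_value c
  have hc : 0 < c := by rw [hcdef]; exact Real.sqrt_pos.2 (by linarith)
  have hc2 : c^2 = 2*L := by rw [hcdef]; exact Real.sq_sqrt (by linarith)
  have hr : c ≤ σ*ε/β := by
    rw [ge_iff_le, div_le_iff₀ hε0] at hcal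
    rw [le_div_iff₀ hβ]; nlinarith
  have hr2 : c^2 ≤ (σ*ε/β)^2 := by nlinarith [hc.le, hr]
  have hEq : (σ^2*ε/β - β/2)^2 = σ^2*(σ*ε/β)^2 - σ^2*ε + β^2/4 := by
    field_simp; ring
  have hKey : (L - 1/2) * (2*σ^2) ≤ (σ^2*ε/β - β/2)^2 := by
    rw [hEq]
    nlinarith [mul_le_mul_of_nonneg_left hr2 (sq_nonneg σ), sq_nonneg σ, sq_nonneg β]
  have hexp : rexp (-(σ^2*ε/β - β/2)^2/(2*σ^2)) ≤ rexp (1/2) * (δ/1.25) := by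
    have h1 : -(σ^2*ε/β - β/2)^2/(2*σ^2) ≤ 1/2 - L := by
      rw [div_le_iff₀ (by positivity)]
      nlinarith
    calc rexp (-(σ^2*ε/β - β/2)^2/(2*σ^2)) ≤ rexp (1/2 - L) := Real.exp_le_exp.2 h1
      _ = rexp (1/2) * rexp (-L) := by rw [← Real.exp_add]; ring_nf
      _ = rexp (1/2) * (δ/1.25) := by
          rw [hLdef, ← Real.log_inv, Real.exp_log (by positivity)]
          norm_num
  have h125 : δ/1.25 = δ*(4/5) := by rw [show (1.25:ℝ) = 5/4 by norm_num]; ring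
  rw [h125] at hexp
  nlinarith [mul_le_mul_of_nonneg_right exp_half_lt.le (by positivity : (0:ℝ) ≤ δ*(4/5)), Real.exp_pos (-(σ^2*ε/β - β/2)^2/(2*σ^2))]

include hε hδ hβ hσ hcal in
set_option maxHeartbeats 1000000 in
lemma realB (hk : σ^2*ε/β - β/2 < 0) :
    (β/2 - σ^2*ε/β) * (Real.sqrt (2*π*σ^2))⁻¹ + 1/2 ≤ δ := by
  obtain ⟨hε0, hε1⟩ := hε
  obtain ⟨hδ0, hδ1⟩ := hδ
  set L := Real.log (1.25/δ) with hLdef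
  clear_value L
  have hL : 0 < L := by rw [hLdef]; exact Real.log_pos (by rw [lt_div_iff₀ hδ0]; linarith)
  set c := Real.sqrt (2*L) with hcdef
  clear_value c
  have hc : 0 < c := by rw [hcdef]; exact Real.sqrt_pos.2 (by linarith)
  have hc2 : c^2 = 2*L := by rw [hcdef]; exact Real.sq_sqrt (by linarith)
  have hr : c ≤ σ*ε/β := by
    rw [ge_iff_le, div_le_iff₀ hε0] at hcal
    rw [le_div_iff₀ hβ]; nlinarith
  -- L ≥ 1/5
  have hL5 : (1/5 : ℝ) ≤ L := by
    rw [hLdef]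
    refine le_trans log_125 (Real.log_le_log (by norm_num) ?_)
    rw [le_div_iff₀ hδ0]; nlinarith
  -- from hk : r^2 < ε/2, so c^2 < 1/2, L < 1/4
  have hrsq : (σ*ε/β)^2 < ε/2 := by
    have h1 : σ^2*ε < β^2/2 := by
      have := hk
      have h2 : σ^2*ε/β < β/2 := by linarith
      rw [div_lt_iff₀ hβ] at h2; nlinarith
    rw [div_pow, div_lt_iff₀ (by positivity)]
    nlinarith
  have hL4 : L < 1/4 := by nlinarith
  -- δ ≥ 15/16
  have hdelta : (15/16 : ℝ) ≤ δ := by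
    have h1 : rexp (-L) = δ/1.25 := by
      rw [hLdef, ← Real.log_inv, Real.exp_log (by positivity)]
      norm_num
    have h2 : rexp (-(1/4 : ℝ)) ≤ rexp (-L) := Real.exp_le_exp.2 (by linarith)
    have h3 : (3/4 : ℝ) ≤ rexp (-(1/4:ℝ)) := by
      have := Real.add_one_le_exp (-(1/4):ℝ); linarith
    rw [h1] at h2
    have h4 : δ/1.25 = δ*(4/5) := by rw [show (1.25:ℝ) = 5/4 by norm_num]; ring
    rw [h4] at h2; linarith
  -- sqrt(2πσ²) = σ * sqrt(2π)
  have hsq : Real.sqrt (2*π*σ^2) = σ * Real.sqrt (2*π) := by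
    rw [Real.sqrt_mul (by positivity), Real.sqrt_sq hσ.le]; ring
  set w := c * Real.sqrt (2*π) with hwdef
  clear_value w
  have hw0 : 0 < w := by rw [hwdef]; exact mul_pos hc (Real.sqrt_pos.2 (by positivity))
  have hw2 : (12/5 : ℝ) ≤ w^2 := by
    have hpi := Real.pi_gt_three
    have h2pi : Real.sqrt (2*π)^2 = 2*π := Real.sq_sqrt (by positivity)
    have hww : w^2 = c^2 * Real.sqrt (2*π)^2 := by rw [hwdef]; ring
    rw [hww, h2pi, hc2]
    nlinarith
  have hw : (8/7 : ℝ) ≤ w := sqrt_aux hw0 hw2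
  -- -k₀ ≤ β/2 ≤ σ/(2c)
  have hβc : β * c ≤ σ := by
    have h5 : c * β ≤ σ*ε/β * β := by nlinarith
    rw [div_mul_cancel₀ _ (ne_of_gt hβ)] at h5
    nlinarith
  have hterm : (β/2 - σ^2*ε/β) * (Real.sqrt (2*π*σ^2))⁻¹ ≤ 1/(2*w) := by
    rw [hsq]
    have h1 : β/2 - σ^2*ε/β ≤ σ/(2*c) := by
      have h2 : (0:ℝ) < σ^2*ε/β := by positivity
      have h3 : β/2 ≤ σ/(2*c) := by
        rw [div_le_div_iff₀ (by norm_num : (0:ℝ) < 2) (by linarith : (0:ℝ) < 2*c)]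
        nlinarith
      linarith
    calc (β/2 - σ^2*ε/β) * (σ * Real.sqrt (2*π))⁻¹
        ≤ (σ/(2*c)) * (σ * Real.sqrt (2*π))⁻¹ := by
          apply mul_le_mul_of_nonneg_right h1 (by positivity)
      _ = 1/(2*w) := by
          have hs0 : Real.sqrt (2*π) ≠ 0 := by positivity
          have hc0 : c ≠ 0 := ne_of_gt hc
          have hσ0 : σ ≠ 0 := ne_of_gt hσ
          rw [hwdef, mul_inv, one_div, mul_inv, mul_inv]
          field_simp
  have hfinal : 1/(2*w) ≤ 7/16 := by
    rw [div_le_div_iff₀ (by linarith : (0:ℝ) < 2*w) (by norm_num : (0:ℝ) < 16)]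
    nlinarith
  linarith only [hterm, hfinal, hdelta]
end


lemma gauss_dp (μ μ' ε δ β σ : ℝ) (hε : ε ∈ Set.Ioo (0:ℝ) 1) (hδ : δ ∈ Set.Ioo (0:ℝ) 1)
    (hβ : 0 < β) (hσ : 0 < σ)
    (hcal : σ ≥ β * Real.sqrt (2 * Real.log (1.25/δ)) / ε)
    (hμ : |μ - μ'| ≤ β) (s : Set ℝ) (hs : MeasurableSet s) :
    gaussianReal μ (σ^2).toNNReal s
      ≤ ENNReal.ofReal (rexp ε) * gaussianReal μ' (σ^2).toNNReal s + ENNReal.ofReal δ := by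
  obtain ⟨hε0, hε1⟩ := hε
  obtain ⟨hδ0, hδ1⟩ := hδ
  have hV : ((σ^2).toNNReal : ℝ) = σ^2 := Real.coe_toNNReal _ (sq_nonneg σ)
  have hVne : (σ^2).toNNReal ≠ 0 := (Real.toNNReal_pos.mpr (by positivity)).ne'
  rcases eq_or_ne μ μ' with hΔ | hΔ
  · subst hΔ
    calc gaussianReal μ (σ^2).toNNReal s
        = 1 * gaussianReal μ (σ^2).toNNReal s := (one_mul _).symm
      _ ≤ ENNReal.ofReal (rexp ε) * gaussianReal μ (σ^2).toNNReal s := by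
          gcongr
          exact ENNReal.one_le_ofReal.2 (Real.one_le_exp hε0.le)
      _ ≤ _ := le_self_add
  -- nontrivial case
  set B : Set ℝ := {x | 2*σ^2*ε < (μ - μ')*(2*x - μ - μ')} with hBdef
  have hB : MeasurableSet B := measurableSet_lt measurable_const (by fun_prop)
  -- tail bound for the canonical half-line
  have tailIci : gaussianReal μ (σ^2).toNNReal (Ici (μ + (σ^2*ε/β - β/2)))
      ≤ ENNReal.ofReal δ := by
    rcases le_or_gt 0 (σ^2*ε/β - β/2) with hk | hk
    · refine le_trans (gauss_tail μ _ _ hVne hk) (ENNReal.ofReal_le_ofReal ?_)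
      rw [hV]
      exact realA ⟨hε0, hε1⟩ ⟨hδ0, hδ1⟩ hβ hσ hcal hk
    · have hsplit : Ici (μ + (σ^2*ε/β - β/2))
          = Ico (μ + (σ^2*ε/β - β/2)) μ ∪ Ici μ := by
        rw [Ico_union_Ici_eq_Ici (by linarith)]
      rw [hsplit]
      refine le_trans (measure_union_le _ _) ?_
      have h1 := gauss_set_le μ _ hVne (Ico (μ + (σ^2*ε/β - β/2)) μ)
      rw [Real.volume_Ico] at h1
      have h2 : gaussianReal μ (σ^2).toNNReal (Ici μ) = 1/2 :=
        gauss_Ici_self μ _ hVne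
      have e1 : ENNReal.ofReal (√(2*π*((σ^2).toNNReal:ℝ)))⁻¹
            * ENNReal.ofReal (μ - (μ + (σ^2*ε/β - β/2)))
          = ENNReal.ofReal ((β/2 - σ^2*ε/β) * (√(2*π*σ^2))⁻¹) := by
        rw [hV, ← ENNReal.ofReal_mul (by positivity)]
        congr 1
        ring
      have e2 : (1/2 : ℝ≥0∞) = ENNReal.ofReal (1/2) := by
        rw [ENNReal.ofReal_div_of_pos (by norm_num)]
        norm_num
      calc gaussianReal μ (σ^2).toNNReal (Ico (μ + (σ^2*ε/β - β/2)) μ)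
            + gaussianReal μ (σ^2).toNNReal (Ici μ)
          ≤ ENNReal.ofReal ((β/2 - σ^2*ε/β) * (√(2*π*σ^2))⁻¹) + ENNReal.ofReal (1/2) := by
            rw [← e1, ← e2]
            exact add_le_add h1 (le_of_eq h2)
        _ = ENNReal.ofReal ((β/2 - σ^2*ε/β) * (√(2*π*σ^2))⁻¹ + 1/2) := by
            rw [← ENNReal.ofReal_add (mul_nonneg (by linarith) (by positivity)) (by norm_num)]
        _ ≤ ENNReal.ofReal δ :=
            ENNReal.ofReal_le_ofReal (realB ⟨hε0, hε1⟩ ⟨hδ0, hδ1⟩ hβ hσ hcal hk)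
  have tailB : gaussianReal μ (σ^2).toNNReal B ≤ ENNReal.ofReal δ := by
    rcases (sub_ne_zero.2 hΔ).lt_or_gt with hneg | hpos
    · -- μ - μ' < 0
      have hsub : B ⊆ Iic (μ - (σ^2*ε/β - β/2)) := by
        intro x hx
        simp only [hBdef, mem_setOf_eq] at hx
        simp only [mem_Iic]
        have he1 : μ' - μ ≤ β := by
          rcases abs_le.1 hμ with ⟨h5, h6⟩; linarith
        have he0 : 0 < μ' - μ := by linarith
        have goal' : (x - μ)*β ≤ β^2/2 - σ^2*ε := by
          nlinarith [mul_nonneg (sub_nonneg.2 he1)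
            (by positivity : (0:ℝ) ≤ β*(μ'-μ) + 2*σ^2*ε)]
        have h6 : x - μ ≤ (β^2/2 - σ^2*ε)/β := by
          rw [le_div_iff₀ hβ]; linarith
        have h7 : (β^2/2 - σ^2*ε)/β = β/2 - σ^2*ε/β := by field_simp
        rw [h7] at h6
        linarith
      calc gaussianReal μ (σ^2).toNNReal B
          ≤ gaussianReal μ (σ^2).toNNReal (Iic (μ - (σ^2*ε/β - β/2))) := measure_mono hsub
        _ = gaussianReal μ (σ^2).toNNReal (Ici (μ + (σ^2*ε/β - β/2))) :=
            gauss_Iic_eq_Ici μ _ _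
        _ ≤ ENNReal.ofReal δ := tailIci
    · -- μ - μ' > 0
      have hsub : B ⊆ Ici (μ + (σ^2*ε/β - β/2)) := by
        intro x hx
        simp only [hBdef, mem_setOf_eq] at hx
        simp only [mem_Ici]
        have he1 : μ - μ' ≤ β := by
          rcases abs_le.1 hμ with ⟨h5, h6⟩; linarith
        have goal' : 2*σ^2*ε - β^2/2*2 ≤ (x - μ)*(2*β) := by
          nlinarith [mul_nonneg (sub_nonneg.2 he1)
            (by positivity : (0:ℝ) ≤ β*(μ-μ') + 2*σ^2*ε)]
        have h6 : (2*σ^2*ε - β^2)/(2*β) ≤ x - μ := by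
          rw [div_le_iff₀ (by positivity)]; linarith
        have h7 : (2*σ^2*ε - β^2)/(2*β) = σ^2*ε/β - β/2 := by field_simp
        rw [h7] at h6
        linarith
      exact le_trans (measure_mono hsub) tailIci
  -- pointwise density comparison off B
  have core : gaussianReal μ (σ^2).toNNReal (s \ B)
      ≤ ENNReal.ofReal (rexp ε) * gaussianReal μ' (σ^2).toNNReal (s \ B) := by
    rw [gaussianReal_apply _ hVne, gaussianReal_apply _ hVne,
      ← lintegral_const_mul _ (measurable_gaussianPDF _ _)]
    refine setLIntegral_mono ((measurable_gaussianPDF _ _).const_mul _) ?_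
    intro x hx
    have hxB : ¬ (2*σ^2*ε < (μ - μ')*(2*x - μ - μ')) := hx.2
    push_neg at hxB
    rw [gaussianPDF, gaussianPDF, ← ENNReal.ofReal_mul (Real.exp_nonneg _)]
    refine ENNReal.ofReal_le_ofReal ?_
    rw [gaussianPDFReal, gaussianPDFReal]
    have key : rexp (-(x-μ)^2/(2*((σ^2).toNNReal:ℝ)))
        ≤ rexp ε * rexp (-(x-μ')^2/(2*((σ^2).toNNReal:ℝ))) := by
      rw [← Real.exp_add, Real.exp_le_exp, hV]
      rw [show ε + -(x-μ')^2/(2*σ^2) = (ε*(2*σ^2) + -(x-μ')^2)/(2*σ^2) by field_simp,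
        div_le_div_iff_of_pos_right (by positivity)]
      nlinarith
    have hC : (0:ℝ) ≤ (√(2*π*((σ^2).toNNReal:ℝ)))⁻¹ := by positivity
    calc (√(2*π*((σ^2).toNNReal:ℝ)))⁻¹ * rexp (-(x-μ)^2/(2*((σ^2).toNNReal:ℝ)))
        ≤ (√(2*π*((σ^2).toNNReal:ℝ)))⁻¹
            * (rexp ε * rexp (-(x-μ')^2/(2*((σ^2).toNNReal:ℝ)))) :=
          mul_le_mul_of_nonneg_left key hC
      _ = rexp ε * ((√(2*π*((σ^2).toNNReal:ℝ)))⁻¹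
            * rexp (-(x-μ')^2/(2*((σ^2).toNNReal:ℝ)))) := by ring
  calc gaussianReal μ (σ^2).toNNReal s
      ≤ gaussianReal μ (σ^2).toNNReal (s ∩ B) + gaussianReal μ (σ^2).toNNReal (s \ B) :=
        measure_le_inter_add_diff _ s B
    _ ≤ ENNReal.ofReal δ + ENNReal.ofReal (rexp ε) * gaussianReal μ' (σ^2).toNNReal (s \ B) :=
        add_le_add (le_trans (measure_mono inter_subset_right) tailB) core
    _ ≤ ENNReal.ofReal δ + ENNReal.ofReal (rexp ε) * gaussianReal μ' (σ^2).toNNReal s := by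
        gcongr
        exact diff_subset
    _ = _ := add_comm _ _


end DPHelpers

open MeasureTheory ProbabilityTheory Real Finset

/-- Privacy guarantee: the randomized power flow release on any line of a radial
distribution grid is `(ε, δ)`-differentially private for `β`-adjacent load datasets. -/
theorem dp_power_flow_release
    {L : Type*} [Fintype L] [DecidableEq L]
    (D : L → Finset L) (hD : ∀ ℓ, ℓ ∉ D ℓ) (g : L → ℝ)
    (f : (L → ℝ) → L → ℝ)
    (hf : ∀ d ℓ, f d ℓ = d ℓ - g ℓ + ∑ i ∈ D ℓ, (d i - g i))
    (ε δ β σ : ℝ) (hε : ε ∈ Set.Ioo (0 : ℝ) 1) (hδ : δ ∈ Set.Ioo (0 : ℝ) 1)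
    (hβ : 0 < β) (hσ : 0 < σ)
    (hcal : σ ≥ β * Real.sqrt (2 * Real.log (1.25 / δ)) / ε)
    (d d' : L → ℝ) (i : L)
    (hadj_i : |d i - d' i| ≤ β) (hadj : ∀ j, j ≠ i → d j = d' j)
    (ℓ : L) (s : Set ℝ) (hs : MeasurableSet s) :
    gaussianReal (f d ℓ) (σ ^ 2).toNNReal s
      ≤ ENNReal.ofReal (Real.exp ε) * gaussianReal (f d' ℓ) (σ ^ 2).toNNReal s
        + ENNReal.ofReal δ := by

  have hsens : |f d ℓ - f d' ℓ| ≤ β := by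
    have hsum : ∑ j ∈ D ℓ, (d j - g j) - ∑ j ∈ D ℓ, (d' j - g j)
        = if i ∈ D ℓ then d i - d' i else 0 := by
      rw [← Finset.sum_sub_distrib]
      rw [← Finset.sum_ite_eq' (D ℓ) i (fun _ => d i - d' i)]
      apply Finset.sum_congr rfl
      intro j _
      by_cases hji : j = i
      · subst hji; simp
      · rw [if_neg hji]
        have := hadj j hji
        ring_nf
        rw [this]
        ring
    have hdiff : f d ℓ - f d' ℓ = (d ℓ - d' ℓ) + (if i ∈ D ℓ then d i - d' i else 0) := by
      rw [hf, hf]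
      have := hsum
      linarith [hsum]
    rcases eq_or_ne ℓ i with hli | hli
    · subst hli
      rw [hdiff, if_neg (hD ℓ)]
      simpa using hadj_i
    · rw [hdiff, hadj ℓ hli, sub_self, zero_add]
      by_cases hmem : i ∈ D ℓ
      · rw [if_pos hmem]; exact hadj_i
      · rw [if_neg hmem]; simpa using hβ.le
  exact gauss_dp (f d ℓ) (f d' ℓ) ε δ β σ hε hδ hβ hσ hcal hsens s hs
end

section
/- Let (Ω, P) be a probability space and (ξ_j)_{j∈L} a finite family of independent real random variables with ξ_j distributed as gaussianReal 0 (σ_j²), where σ_j ≥ 0. Fix a line ℓ ∈ L, a node set D_ℓ indexing the downstream suppliers of line ℓ, participation factors α_{iℓ} ∈ ℝ satisfying the balancing condition Σ_{i∈D_ℓ} α_{iℓ} = 1, and coefficients c : L → ℝ with c_ℓ = Σ_{i∈D_ℓ} α_{iℓ}. Then the randomized flow f̃_ℓ = f_ℓ − Σ_{j∈L} c_j ξ_j (with f_ℓ ∈ ℝ the nominal flow) satisfies Var[f̃_ℓ] ≥ σ_ℓ². (Lemma 1: under the balancing conditions, σ_ℓ is a lower bound on the standard deviation of the randomized power flow on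 line ℓ, irrespective of additional perturbations on other lines.) -/
open MeasureTheory ProbabilityTheory Real Finset

private lemma integral_sq_mul_exp_neg_mul_sq' {b : ℝ} (hb : 0 < b) :
    ∫ x : ℝ, x ^ 2 * Real.exp (-b * x ^ 2) = (2 * b)⁻¹ * Real.sqrt (π / b) := by
  have hint_sq : Integrable (fun x : ℝ => x ^ 2 * Real.exp (-b * x ^ 2)) := by
    have := integrable_rpow_mul_exp_neg_mul_sq hb (by norm_num : (-1:ℝ) < 2)
    simpa [Real.rpow_two] using this
  have hint_exp : Integrable (fun x : ℝ => Real.exp (-b * x ^ 2)) :=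
    integrable_exp_neg_mul_sq hb
  have hderiv : ∀ x : ℝ, HasDerivAt (fun x : ℝ => x * Real.exp (-b * x ^ 2))
      (Real.exp (-b * x ^ 2) - 2 * b * (x ^ 2 * Real.exp (-b * x ^ 2))) x := by
    intro x
    have h1 : HasDerivAt (fun x : ℝ => -b * x ^ 2) (-b * (2 * x)) x := by
      simpa using ((hasDerivAt_pow 2 x).const_mul (-b))
    have h2 : HasDerivAt (fun x : ℝ => Real.exp (-b * x ^ 2))
        (Real.exp (-b * x ^ 2) * (-b * (2 * x))) x := h1.exp
    have := (hasDerivAt_id x).mul h2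
    exact this.congr_deriv (by simp only [id]; ring)
  have hf' : Integrable (fun x : ℝ =>
      Real.exp (-b * x ^ 2) - 2 * b * (x ^ 2 * Real.exp (-b * x ^ 2))) :=
    hint_exp.sub (hint_sq.const_mul _)
  have hzero := integral_eq_zero_of_hasDerivAt_of_integrable hderiv hf'
    (integrable_mul_exp_neg_mul_sq hb)
  rw [integral_sub hint_exp (hint_sq.const_mul _), MeasureTheory.integral_const_mul,
    integral_gaussian] at hzero
  have h2b : (2 * b) ≠ 0 := by positivity
  field_simp at hzero ⊢
  linarith

private lemma integrable_sq_gaussianReal' (v : NNReal) :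
    Integrable (fun x : ℝ => x ^ 2) (gaussianReal 0 v) := by
  by_cases hv : v = 0
  · rw [hv, gaussianReal_zero_var]
    exact (integrable_const ((0:ℝ) ^ 2)).congr (ae_eq_dirac (fun x : ℝ => x ^ 2)).symm
  · rw [gaussianReal_of_var_ne_zero _ hv]
    have hdensity : (gaussianPDF 0 v) = fun x => ((gaussianPDFReal 0 v x).toNNReal : ENNReal) :=
      rfl
    rw [hdensity, integrable_withDensity_iff_integrable_smul
      ((measurable_gaussianPDFReal 0 v).real_toNNReal)]
    have hb : (0:ℝ) < (2 * (v:ℝ))⁻¹ := by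
      have : (0:ℝ) < (v:ℝ) := lt_of_le_of_ne (v.coe_nonneg) (by exact_mod_cast (Ne.symm hv))
      positivity
    have hint : Integrable (fun x : ℝ => x ^ 2 * Real.exp (-(2 * (v:ℝ))⁻¹ * x ^ 2)) := by
      have := integrable_rpow_mul_exp_neg_mul_sq hb (by norm_num : (-1:ℝ) < 2)
      simpa [Real.rpow_two] using this
    apply Integrable.mono' (hint.const_mul ((Real.sqrt (2 * π * (v:ℝ)))⁻¹))
    · exact (((measurable_gaussianPDFReal 0 v).real_toNNReal).smul
        (by fun_prop : Measurable fun x : ℝ => x ^ 2)).aestronglyMeasurable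
    · filter_upwards with x
      have h0 : 0 ≤ gaussianPDFReal 0 v x := gaussianPDFReal_nonneg _ _ _
      rw [NNReal.smul_def, smul_eq_mul, norm_mul]
      simp only [Real.norm_eq_abs, NNReal.abs_eq, NNReal.coe_mk, Real.coe_toNNReal _ h0]
      rw [abs_of_nonneg h0]
      rw [gaussianPDFReal]
      have : -x ^ 2 / (2 * (v:ℝ)) = -(2 * (v:ℝ))⁻¹ * x ^ 2 := by ring
      simp only [zero_sub, neg_sq, sub_zero, this]
      rw [abs_of_nonneg (sq_nonneg x)]
      ring_nf
      exact le_refl _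

private lemma integral_sq_gaussianReal' (v : NNReal) :
    ∫ x, x ^ 2 ∂(gaussianReal 0 v) = (v : ℝ) := by
  by_cases hv : v = 0
  · rw [hv, gaussianReal_zero_var, integral_dirac]
    norm_num
  · have hvpos : (0:ℝ) < (v:ℝ) := lt_of_le_of_ne (v.coe_nonneg) (by exact_mod_cast (Ne.symm hv))
    have hb : (0:ℝ) < (2 * (v:ℝ))⁻¹ := by positivity
    rw [gaussianReal_of_var_ne_zero _ hv]
    have hdensity : (gaussianPDF 0 v) = fun x => ((gaussianPDFReal 0 v x).toNNReal : ENNReal) :=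
      rfl
    rw [hdensity, integral_withDensity_eq_integral_smul
      ((measurable_gaussianPDFReal 0 v).real_toNNReal)]
    have heq : ∀ x : ℝ, (gaussianPDFReal 0 v x).toNNReal • x ^ 2
        = (√(2 * π * (v:ℝ)))⁻¹ * (x ^ 2 * rexp (-(2 * (v:ℝ))⁻¹ * x ^ 2)) := by
      intro x
      rw [NNReal.smul_def, smul_eq_mul,
        Real.coe_toNNReal _ (gaussianPDFReal_nonneg 0 v x), gaussianPDFReal]
      have : -(x - 0) ^ 2 / (2 * (v:ℝ)) = -(2 * (v:ℝ))⁻¹ * x ^ 2 := by ring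
      rw [this]; ring
    simp_rw [heq]
    rw [MeasureTheory.integral_const_mul, integral_sq_mul_exp_neg_mul_sq' hb]
    have h1 : (2 * (2 * (v:ℝ))⁻¹)⁻¹ = (v:ℝ) := by
      rw [mul_inv, inv_inv]; field_simp
    have h2 : π / (2 * (v:ℝ))⁻¹ = 2 * π * (v:ℝ) := by field_simp
    rw [h2, h1]
    have hs : (0:ℝ) < √(2 * π * (v:ℝ)) := Real.sqrt_pos.mpr (by positivity)
    field_simp

private lemma integral_id_gaussianReal' (v : NNReal) :
    ∫ x, x ∂(gaussianReal 0 v) = 0 := by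
  have hint : Integrable (fun x : ℝ => x) (gaussianReal 0 v) := by
    have h2 : MemLp (fun x : ℝ => x) 2 (gaussianReal 0 v) :=
      (memLp_two_iff_integrable_sq aestronglyMeasurable_id).2 (integrable_sq_gaussianReal' v)
    exact h2.integrable one_le_two
  have hmap : (gaussianReal 0 v).map (fun x => (-1:ℝ) * x) = gaussianReal 0 v := by
    rw [gaussianReal_map_const_mul]
    norm_num
  have : ∫ x, x ∂(gaussianReal 0 v) = ∫ x, (-1:ℝ) * x ∂(gaussianReal 0 v) := by
    conv_lhs => rw [← hmap]
    exact integral_map (measurable_id.const_mul (-1:ℝ)).aemeasurable aestronglyMeasurable_id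
  rw [MeasureTheory.integral_const_mul] at this
  linarith

/-- Lemma 1: under the balancing condition `∑ i ∈ Dℓ, α i = 1`, the standard deviation of
the randomized power flow on line `ℓ` is bounded below by `σ ℓ`, irrespective of additional
perturbations on other lines: `Var[f̃ℓ] ≥ σℓ²`. -/
theorem flow_variance_lower_bound
    {Ω : Type*} [MeasurableSpace Ω] (P : Measure Ω) [IsProbabilityMeasure P]
    {L : Type*} [Fintype L]
    (ξ : L → Ω → ℝ) (σ : L → ℝ) (hσ : ∀ j, 0 ≤ σ j)
    (hindep : iIndepFun ξ P)
    (hmeas : ∀ j, Measurable (ξ j))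
    (hlaw : ∀ j, Measure.map (ξ j) P = gaussianReal 0 ((σ j) ^ 2).toNNReal)
    (ℓ : L)
    {ι : Type*} (Dℓ : Finset ι) (α : ι → ℝ)
    (hbal : ∑ i ∈ Dℓ, α i = 1)
    (c : L → ℝ) (hc : c ℓ = ∑ i ∈ Dℓ, α i)
    (fℓ : ℝ) :
    variance (fun ω => fℓ - ∑ j, c j * ξ j ω) P ≥ (σ ℓ) ^ 2 := by
  classical
  -- each ξ j is in L²
  have hmem : ∀ j, MemLp (ξ j) 2 P := by
    intro j
    apply (memLp_two_iff_integrable_sq (hmeas j).aestronglyMeasurable).2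
    have h := integrable_sq_gaussianReal' ((σ j) ^ 2).toNNReal
    rw [← hlaw j, integrable_map_measure (by fun_prop) (hmeas j).aemeasurable] at h
    exact h
  -- mean of each ξ j is 0
  have hmean : ∀ j, ∫ ω, ξ j ω ∂P = 0 := by
    intro j
    have h := integral_id_gaussianReal' ((σ j) ^ 2).toNNReal
    rw [← hlaw j, integral_map (hmeas j).aemeasurable
      (measurable_id'.aestronglyMeasurable : AEStronglyMeasurable (fun x : ℝ => x) _)] at h
    exact h
  -- second moment of each ξ j is σ j ^ 2
  have hsecond : ∀ j, ∫ ω, (ξ j ω) ^ 2 ∂P = σ j ^ 2 := by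
    intro j
    have h := integral_sq_gaussianReal' ((σ j) ^ 2).toNNReal
    rw [← hlaw j, integral_map (hmeas j).aemeasurable (by fun_prop)] at h
    rw [Real.coe_toNNReal _ (sq_nonneg (σ j))] at h
    exact h
  -- variance of each ξ j is σ j ^ 2
  have hvar : ∀ j, variance (ξ j) P = σ j ^ 2 := by
    intro j
    rw [variance_eq_sub (hmem j)]
    have h1 : (∫ ω, ((ξ j) ^ 2) ω ∂P) = σ j ^ 2 := by
      simpa using hsecond j
    rw [h1, hmean j]
    ring
  set S : Ω → ℝ := fun ω => ∑ j, c j * ξ j ω with hSdef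
  have hXsum : S = ∑ j : L, (fun ω => c j * ξ j ω) := by
    ext ω; simp [hSdef]
  have hSmem : MemLp S 2 P := by
    rw [hXsum]
    exact memLp_finset_sum' _ (fun j _ => (hmem j).const_mul (c j))
  have hSint : Integrable S P := hSmem.integrable one_le_two
  -- variance of (fℓ - S) equals variance of S
  have hms : ∫ ω, (fℓ - S ω) ∂P = fℓ - ∫ ω, S ω ∂P := by
    rw [integral_sub (integrable_const fℓ) hSint, integral_const, probReal_univ]
    simp
  have hshift : variance (fun ω => fℓ - S ω) P = variance S P := by
    rw [variance, variance, evariance, evariance]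
    congr 1
    apply lintegral_congr
    intro ω
    rw [hms]
    have : fℓ - S ω - (fℓ - ∫ ω, S ω ∂P) = -(S ω - ∫ ω, S ω ∂P) := by ring
    rw [this, enorm_neg]
  -- variance of S is the sum of variances
  have hsum : variance S P = ∑ j, c j ^ 2 * (σ j ^ 2) := by
    rw [hXsum, IndepFun.variance_sum (fun j _ => (hmem j).const_mul (c j))]
    · simp_rw [variance_const_mul, hvar]
    · intro i hi j hj hij
      exact (hindep.indepFun hij).comp (measurable_const_mul (c i)) (measurable_const_mul (c j))
  -- conclude
  have hcl : c ℓ = 1 := hc.trans hbal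
  have hterm : c ℓ ^ 2 * (σ ℓ ^ 2) = σ ℓ ^ 2 := by rw [hcl]; ring
  have hle : σ ℓ ^ 2 ≤ ∑ j, c j ^ 2 * (σ j ^ 2) := by
    rw [← hterm]
    exact Finset.single_le_sum (f := fun j => c j ^ 2 * (σ j ^ 2))
      (fun j _ => by positivity) (Finset.mem_univ ℓ)
  calc (σ ℓ) ^ 2 ≤ ∑ j, c j ^ 2 * (σ j ^ 2) := hle
    _ = variance S P := hsum.symm
    _ = variance (fun ω => fℓ - S ω) P := hshift.symm
end

section
/- Let (Ω, P) be a probability space, (ξ_i)_{i∈I} a finite family of independent real random variables with ξ_i distributed as gaussianReal 0 (σ_i²) where σ_i ≥ 0, and x : I → ℝ, b ∈ ℝ, η ∈ (0,1). Let z_η ∈ ℝ satisfy Φ(z_η) = 1 − η, where Φ is the standard normal cumulative distribution function. Then P(Σ_{i∈I} x_i·ξ_i ≤ b) ≥ 1 − η if and only if z_η·√(Σ_{i∈I} x_i²·σ_i²) ≤ b. (Exact second-order cone reformulation of the linear Gaussian chance constraint.) -/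
open MeasureTheory ProbabilityTheory Real Finset

open scoped NNReal ENNReal

private lemma pdf_conv_aux (a b : ℝ≥0) (ha : a ≠ 0) (hb : b ≠ 0) (y x : ℝ) :
    gaussianPDFReal 0 a x * gaussianPDFReal 0 b (y - x)
      = gaussianPDFReal 0 (a + b) y * gaussianPDFReal ((a : ℝ) * y / (a + b)) (a * b / (a + b)) x := by
  have hA : (0:ℝ) < a := lt_of_le_of_ne a.coe_nonneg (by exact_mod_cast (Ne.symm ha))
  have hB : (0:ℝ) < b := lt_of_le_of_ne b.coe_nonneg (by exact_mod_cast (Ne.symm hb))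
  have hAB : (0:ℝ) < (a:ℝ) + b := by positivity
  have hco : ((a * b / (a + b) : ℝ≥0) : ℝ) = (a : ℝ) * b / ((a:ℝ) + b) := by push_cast; ring
  simp only [gaussianPDFReal, NNReal.coe_add, hco, sub_zero]
  rw [show (√(2 * π * a))⁻¹ * rexp (-x ^ 2 / (2 * a)) * ((√(2 * π * b))⁻¹ * rexp (-(y - x) ^ 2 / (2 * b)))
      = ((√(2 * π * a))⁻¹ * (√(2 * π * b))⁻¹) * (rexp (-x ^ 2 / (2 * a)) * rexp (-(y - x) ^ 2 / (2 * b))) by ring,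
    show (√(2 * π * ((a:ℝ) + b)))⁻¹ * rexp (-y ^ 2 / (2 * ((a:ℝ) + b))) *
        ((√(2 * π * ((a:ℝ) * b / ((a:ℝ) + b))))⁻¹ * rexp (-(x - (a:ℝ) * y / ((a:ℝ)+b)) ^ 2 / (2 * ((a:ℝ) * b / ((a:ℝ)+b)))))
      = ((√(2 * π * ((a:ℝ) + b)))⁻¹ * (√(2 * π * ((a:ℝ) * b / ((a:ℝ) + b))))⁻¹) *
        (rexp (-y ^ 2 / (2 * ((a:ℝ) + b))) * rexp (-(x - (a:ℝ) * y / ((a:ℝ)+b)) ^ 2 / (2 * ((a:ℝ) * b / ((a:ℝ)+b))))) by ring,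
    ← Real.exp_add, ← Real.exp_add]
  congr 1
  · rw [← mul_inv, ← mul_inv, ← Real.sqrt_mul (by positivity), ← Real.sqrt_mul (by positivity)]
    congr 1
    field_simp
  · congr 1
    field_simp
    ring

private lemma gaussianReal_conv_aux (a b : ℝ≥0) :
    Measure.conv (gaussianReal 0 a) (gaussianReal 0 b) = gaussianReal 0 (a + b) := by
  by_cases ha : a = 0
  · simp [ha, gaussianReal_zero_var]
  by_cases hb : b = 0
  · simp [hb, gaussianReal_zero_var]
  have hab : a + b ≠ 0 := by positivity
  refine Measure.ext_of_Iic _ _ (fun t => ?_)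
  rw [Measure.conv, Measure.map_apply measurable_add measurableSet_Iic,
    Measure.prod_apply (measurable_add measurableSet_Iic)]
  have h1 : ∀ x : ℝ, gaussianReal 0 b (Set.Iic (t - x))
      = ∫⁻ y in Set.Iic t, gaussianPDF 0 b (y - x) := by
    intro x
    have hmp : Measure.map (· + x) (volume : Measure ℝ) = volume :=
      (measurePreserving_add_right volume x).map_eq
    calc gaussianReal 0 b (Set.Iic (t - x))
        = ∫⁻ z in Set.Iic (t - x), gaussianPDF 0 b z := by
          rw [gaussianReal_of_var_ne_zero _ hb, withDensity_apply _ measurableSet_Iic]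
      _ = ∫⁻ z in (· + x) ⁻¹' Set.Iic t, gaussianPDF 0 b (z + x - x) := by
          congr 1
          · ext z; simp [Set.mem_Iic, le_sub_iff_add_le]
          · funext z; rw [add_sub_cancel_right]
      _ = ∫⁻ y in Set.Iic t, gaussianPDF 0 b (y - x) ∂(Measure.map (· + x) volume) := by
          exact (setLIntegral_map (f := fun y => gaussianPDF 0 b (y - x)) (g := (· + x)) measurableSet_Iic
            ((measurable_gaussianPDF 0 b).comp (measurable_sub_const x))
            (measurable_add_const x)).symm
      _ = ∫⁻ y in Set.Iic t, gaussianPDF 0 b (y - x) := by rw [hmp]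
  have hpre : ∀ x : ℝ, Prod.mk x ⁻¹' {p : ℝ × ℝ | p.1 + p.2 ∈ Set.Iic t} = Set.Iic (t - x) := by
    intro x; ext y; simp [le_sub_iff_add_le, add_comm]
  calc ∫⁻ x, gaussianReal 0 b (Prod.mk x ⁻¹' ((fun p : ℝ × ℝ => p.1 + p.2) ⁻¹' Set.Iic t)) ∂(gaussianReal 0 a)
      = ∫⁻ x, (∫⁻ y in Set.Iic t, gaussianPDF 0 b (y - x)) ∂(gaussianReal 0 a) := by
        refine lintegral_congr (fun x => ?_)
        rw [show (fun p : ℝ × ℝ => p.1 + p.2) ⁻¹' Set.Iic t = {p : ℝ × ℝ | p.1 + p.2 ∈ Set.Iic t} from rfl,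
          hpre x, h1 x]
    _ = ∫⁻ x, gaussianPDF 0 a x * (∫⁻ y in Set.Iic t, gaussianPDF 0 b (y - x)) ∂volume := by
        rw [gaussianReal_of_var_ne_zero _ ha,
          lintegral_withDensity_eq_lintegral_mul volume (measurable_gaussianPDF 0 a)]
        · rfl
        · exact Measurable.lintegral_prod_right (f := fun x y => gaussianPDF 0 b (y - x))
            ((measurable_gaussianPDF 0 b).comp (measurable_snd.sub measurable_fst))
    _ = ∫⁻ x, (∫⁻ y in Set.Iic t, gaussianPDF 0 a x * gaussianPDF 0 b (y - x)) ∂volume := by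
        exact lintegral_congr fun x =>
          (lintegral_const_mul _ ((measurable_gaussianPDF 0 b).comp (measurable_sub_const x))).symm
    _ = ∫⁻ y in Set.Iic t, (∫⁻ x, gaussianPDF 0 a x * gaussianPDF 0 b (y - x) ∂volume) := by
        refine lintegral_lintegral_swap ?_
        exact (((measurable_gaussianPDF 0 a).comp measurable_fst).mul
          ((measurable_gaussianPDF 0 b).comp (measurable_snd.sub measurable_fst))).aemeasurable
    _ = ∫⁻ y in Set.Iic t, gaussianPDF 0 (a + b) y := by
        refine setLIntegral_congr_fun measurableSet_Iic (fun y _ => ?_)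
        have hV : (a * b / (a + b) : ℝ≥0) ≠ 0 := by positivity
        calc ∫⁻ x, gaussianPDF 0 a x * gaussianPDF 0 b (y - x) ∂volume
            = ∫⁻ x, gaussianPDF 0 (a + b) y * gaussianPDF ((a:ℝ) * y / (a + b)) (a * b / (a + b)) x ∂volume := by
              refine lintegral_congr fun x => ?_
              rw [gaussianPDF, gaussianPDF, gaussianPDF, gaussianPDF,
                ← ENNReal.ofReal_mul (gaussianPDFReal_nonneg _ _ _),
                ← ENNReal.ofReal_mul (gaussianPDFReal_nonneg _ _ _), pdf_conv_aux a b ha hb y x]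
          _ = gaussianPDF 0 (a + b) y := by
              rw [lintegral_const_mul _ (measurable_gaussianPDF _ _),
                lintegral_gaussianPDF_eq_one _ hV, mul_one]
    _ = gaussianReal 0 (a + b) (Set.Iic t) := by
        rw [gaussianReal_of_var_ne_zero _ hab, withDensity_apply _ measurableSet_Iic]

private lemma map_add_conv_aux {Ω : Type*} [MeasurableSpace Ω] (P : Measure Ω)
    [IsProbabilityMeasure P] {X Y : Ω → ℝ} (hX : Measurable X) (hY : Measurable Y)
    (h : IndepFun X Y P) :
    Measure.map (fun ω => X ω + Y ω) P = Measure.conv (Measure.map X P) (Measure.map Y P) := by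
  rw [Measure.conv, ← (indepFun_iff_map_prod_eq_prod_map_map hX.aemeasurable hY.aemeasurable).mp h,
    Measure.map_map measurable_add (hX.prodMk hY)]
  rfl

/-- Exact second-order cone reformulation of a linear Gaussian chance constraint:
for independent centered Gaussian perturbations `ξᵢ` with standard deviations `σᵢ`,
`P(∑ xᵢ ξᵢ ≤ b) ≥ 1 − η` holds iff `z_η √(∑ xᵢ² σᵢ²) ≤ b`, where `Φ(z_η) = 1 − η`. -/
theorem gaussian_chance_constraint_soc
    {Ω : Type*} [MeasurableSpace Ω] (P : Measure Ω) [IsProbabilityMeasure P]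
    {I : Type*} [Fintype I]
    (ξ : I → Ω → ℝ) (σ : I → ℝ) (hσ : ∀ i, 0 ≤ σ i)
    (hindep : iIndepFun ξ P)
    (hmeas : ∀ i, Measurable (ξ i))
    (hlaw : ∀ i, Measure.map (ξ i) P = gaussianReal 0 ((σ i) ^ 2).toNNReal)
    (x : I → ℝ) (b : ℝ) (η : ℝ) (hη : η ∈ Set.Ioo (0 : ℝ) 1)
    (zη : ℝ) (hz : (gaussianReal 0 1 (Set.Iic zη)).toReal = 1 - η) :
    P {ω | ∑ i, x i * ξ i ω ≤ b} ≥ ENNReal.ofReal (1 - η)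
      ↔ zη * Real.sqrt (∑ i, (x i) ^ 2 * (σ i) ^ 2) ≤ b := by
  classical
  set w : I → ℝ≥0 := fun i => ((x i) ^ 2 * (σ i) ^ 2).toNNReal with hw
  have hfmeas : ∀ i, Measurable (fun ω => x i * ξ i ω) :=
    fun i => (hmeas i).const_mul (x i)
  have hsingle : ∀ i, Measure.map (fun ω => x i * ξ i ω) P = gaussianReal 0 (w i) := by
    intro i
    rw [show (fun ω => x i * ξ i ω) = (x i * ·) ∘ ξ i from rfl,
      ← Measure.map_map (measurable_const_mul _) (hmeas i), hlaw i, gaussianReal_map_const_mul]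
    rw [mul_zero]
    congr 1
    ext
    simp [hw, NNReal.coe_mul, Real.coe_toNNReal _ (sq_nonneg (σ i)),
      Real.coe_toNNReal _ (mul_nonneg (sq_nonneg (x i)) (sq_nonneg (σ i)))]
  have hfind : iIndepFun (fun i => fun ω => x i * ξ i ω) P :=
    hindep.comp (fun i => (x i * ·)) (fun i => measurable_const_mul _)
  have hsum : ∀ s : Finset I,
      Measure.map (fun ω => ∑ j ∈ s, x j * ξ j ω) P = gaussianReal 0 (∑ j ∈ s, w j) := by
    intro s
    induction s using Finset.induction with
    | empty => simp [Measure.map_const, gaussianReal_zero_var]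
    | @insert i s hi ih =>
      have hind : IndepFun (fun ω => x i * ξ i ω) (fun ω => ∑ j ∈ s, x j * ξ j ω) P := by
        have := (hfind.indepFun_finsetSum_of_notMem hfmeas hi).symm
        have heq : (∑ j ∈ s, fun ω => x j * ξ j ω) = fun ω => ∑ j ∈ s, x j * ξ j ω := by
          funext ω; rw [Finset.sum_apply]
        rwa [heq] at this
      have heq2 : (fun ω => ∑ j ∈ insert i s, x j * ξ j ω)
          = fun ω => x i * ξ i ω + ∑ j ∈ s, x j * ξ j ω := by
        funext ω; rw [Finset.sum_insert hi]
      rw [heq2, map_add_conv_aux P (hfmeas i) (Finset.measurable_sum s fun j _ => hfmeas j) hind,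
        hsingle i, ih, gaussianReal_conv_aux, Finset.sum_insert hi]
  set V : ℝ := ∑ i, (x i) ^ 2 * (σ i) ^ 2 with hVdef
  have hV0 : 0 ≤ V := Finset.sum_nonneg fun i _ => mul_nonneg (sq_nonneg _) (sq_nonneg _)
  have hwV : (∑ i, w i) = V.toNNReal := by
    ext
    push_cast [hw]
    rw [Real.coe_toNNReal _ hV0, hVdef]
    exact Finset.sum_congr rfl fun i _ =>
      Real.coe_toNNReal _ (mul_nonneg (sq_nonneg (x i)) (sq_nonneg (σ i)))
  have hmap : Measure.map (fun ω => ∑ i, x i * ξ i ω) P = gaussianReal 0 V.toNNReal := by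
    rw [hsum Finset.univ, hwV]
  have hset : P {ω | ∑ i, x i * ξ i ω ≤ b} = gaussianReal 0 V.toNNReal (Set.Iic b) := by
    rw [← hmap, Measure.map_apply (Finset.measurable_sum Finset.univ fun i _ => hfmeas i)
      measurableSet_Iic]
    rfl
  rcases eq_or_lt_of_le hV0 with hVz | hVpos
  · -- V = 0
    have hVz' : V.toNNReal = 0 := by simp [← hVz]
    have hsq : Real.sqrt V = 0 := by rw [← hVz, Real.sqrt_zero]
    rw [hset, hVz', gaussianReal_zero_var, hsq, mul_zero]
    by_cases hb0 : (0:ℝ) ≤ b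
    · have : Measure.dirac (0:ℝ) (Set.Iic b) = 1 :=
        Measure.dirac_apply_of_mem (by simpa using hb0)
      rw [this]
      simp only [ge_iff_le]
      exact iff_of_true (ENNReal.ofReal_le_one.mpr (by linarith [hη.1])) hb0
    · have : Measure.dirac (0:ℝ) (Set.Iic b) = 0 := by
        rw [Measure.dirac_apply' _ measurableSet_Iic,
          Set.indicator_of_notMem (by simpa using hb0)]
      rw [this]
      simp only [ge_iff_le, nonpos_iff_eq_zero]
      refine iff_of_false ?_ hb0
      intro h
      have := ENNReal.ofReal_pos.mpr (show (0:ℝ) < 1 - η by linarith [hη.2])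
      simp [h] at this
  · -- V > 0
    have hsq : 0 < Real.sqrt V := Real.sqrt_pos.mpr hVpos
    have hstd : gaussianReal 0 V.toNNReal = Measure.map (Real.sqrt V * ·) (gaussianReal 0 1) := by
      rw [gaussianReal_map_const_mul, mul_zero]
      congr 1
      ext
      simp [Real.sq_sqrt hV0, Real.coe_toNNReal _ hV0]
    have hpre : (Real.sqrt V * ·) ⁻¹' Set.Iic b = Set.Iic (b / Real.sqrt V) := by
      ext z
      simp [Set.mem_Iic, le_div_iff₀ hsq, mul_comm]
    have hset2 : P {ω | ∑ i, x i * ξ i ω ≤ b}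
        = gaussianReal 0 1 (Set.Iic (b / Real.sqrt V)) := by
      rw [hset, hstd, Measure.map_apply (measurable_const_mul _) measurableSet_Iic, hpre]
    have hΦ : StrictMono (fun t => (gaussianReal 0 1 (Set.Iic t)).toReal) := by
      intro u v huv
      have hioc : gaussianReal 0 1 (Set.Ioc u v) ≠ 0 := by
        intro h0
        have := gaussianReal_absolutelyContinuous' 0 (one_ne_zero) h0
        rw [Real.volume_Ioc] at this
        exact (ENNReal.ofReal_pos.mpr (by linarith)).ne' this
      have hunion : gaussianReal 0 1 (Set.Iic u) + gaussianReal 0 1 (Set.Ioc u v)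
          = gaussianReal 0 1 (Set.Iic v) := by
        rw [← measure_union (Set.Iic_disjoint_Ioc le_rfl) measurableSet_Ioc,
          Set.Iic_union_Ioc_eq_Iic huv.le]
      have hlt : gaussianReal 0 1 (Set.Iic u) < gaussianReal 0 1 (Set.Iic v) :=
        hunion ▸ ENNReal.lt_add_right (measure_ne_top _ _) hioc
      exact (ENNReal.toReal_lt_toReal (measure_ne_top _ _) (measure_ne_top _ _)).mpr hlt
    rw [ge_iff_le, hset2, ENNReal.ofReal_le_iff_le_toReal (measure_ne_top _ _), ← hz]
    rw [show (gaussianReal 0 1 (Set.Iic zη)).toReal ≤ (gaussianReal 0 1 (Set.Iic (b / Real.sqrt V))).toReal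
      ↔ zη ≤ b / Real.sqrt V from hΦ.le_iff_le]
    exact le_div_iff₀ hsq
end

section
/- Let m ≥ 3 be a natural number, r > 0, and x, y ∈ ℝ. If for every k ∈ {0, 1, …, m−1} the inequality x·cos(2πk/m) + y·sin(2πk/m) ≤ r·cos(π/m) holds, then x² + y² ≤ r². (Inner polygon approximation: the regular m-gon described by these m halfplane constraints is inscribed in the disk of radius r, so any point feasible for the linear constraints is feasible for the quadratic apparent-power limit.) -/
open Real

/-- Inner polygon approximation: the regular `m`-gon described by the `m` halfplane
constraints `x·cos(2πk/m) + y·sin(2πk/m) ≤ r·cos(π/m)` is inscribed in the disk of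
radius `r`, so any point feasible for the linear constraints satisfies the quadratic
apparent-power limit `x² + y² ≤ r²`. -/
theorem inner_polygon_in_disk
    (m : ℕ) (hm : 3 ≤ m) (r : ℝ) (hr : 0 < r) (x y : ℝ)
    (hpoly : ∀ k ∈ Finset.range m,
      x * Real.cos (2 * Real.pi * k / m) + y * Real.sin (2 * Real.pi * k / m)
        ≤ r * Real.cos (Real.pi / m)) :
    x ^ 2 + y ^ 2 ≤ r ^ 2 := by
  have hm0 : (0:ℝ) < m := by
    have : (0:ℕ) < m := by omega
    exact_mod_cast this
  have hmz : (m:ℤ) ≠ 0 := by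
    have : (0:ℕ) < m := by omega
    omega
  set z : ℂ := ⟨x, y⟩ with hz
  by_cases hz0 : z = 0
  · have hx : x = 0 := congrArg Complex.re hz0
    have hy : y = 0 := congrArg Complex.im hz0
    rw [hx, hy]
    nlinarith
  set ρ : ℝ := ‖z‖ with hρ
  have hρ0 : 0 < ρ := by
    simpa [hρ] using (norm_pos_iff.mpr hz0)
  set φ : ℝ := Complex.arg z with hφ
  have hxρ : x = ρ * Real.cos φ := (Complex.norm_mul_cos_arg z).symm
  have hyρ : y = ρ * Real.sin φ := (Complex.norm_mul_sin_arg z).symm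
  -- pick the nearest direction
  set n : ℤ := round (φ * m / (2 * π)) with hn
  set k : ℕ := (n % m).toNat with hk
  have hkm : k < m := by
    have h1 : n % m < (m:ℤ) := Int.emod_lt_of_pos n (by exact_mod_cast (by omega : 0 < m))
    have h0 : 0 ≤ n % m := Int.emod_nonneg n hmz
    omega
  have hkcast : ((k:ℤ) : ℝ) = (n:ℝ) - (m:ℝ) * ((n / m : ℤ) : ℝ) := by
    have : (k:ℤ) = n - m * (n / m) := by
      rw [hk, Int.toNat_of_nonneg (Int.emod_nonneg n hmz), Int.emod_def]
    exact_mod_cast congrArg (Int.cast : ℤ → ℝ) this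
  set θ : ℝ := 2 * π * n / m with hθ
  have hmne : (m:ℝ) ≠ 0 := ne_of_gt hm0
  have hθk : 2 * π * k / m = θ - (n / m : ℤ) * (2 * π) := by
    have hkr : ((k:ℕ):ℝ) = (n:ℝ) - (m:ℝ) * ((n / m : ℤ) : ℝ) := by exact_mod_cast hkcast
    rw [hθ, hkr]
    field_simp
  have hcosk : Real.cos (2 * π * k / m) = Real.cos θ := by
    rw [hθk, Real.cos_sub_int_mul_two_pi]
  have hsink : Real.sin (2 * π * k / m) = Real.sin θ := by
    rw [hθk, Real.sin_sub_int_mul_two_pi]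
  -- |φ - θ| ≤ π/m
  have hπ : (0:ℝ) < π := Real.pi_pos
  have habs : |φ - θ| ≤ π / m := by
    have h1 : |φ * m / (2 * π) - n| ≤ 1 / 2 := abs_sub_round _
    have h2 : φ - θ = (φ * m / (2 * π) - n) * (2 * π / m) := by
      rw [hθ]; field_simp
    rw [h2, abs_mul, abs_of_pos (by positivity : (0:ℝ) < 2 * π / m)]
    calc |φ * m / (2 * π) - n| * (2 * π / m) ≤ (1/2) * (2 * π / m) := by
          apply mul_le_mul_of_nonneg_right h1 (by positivity)
      _ = π / m := by ring
  have h3 : (3:ℝ) ≤ m := by exact_mod_cast hm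
  have hπm : π / m ≤ π / 3 := div_le_div_of_nonneg_left hπ.le (by norm_num) h3
  have hcos_ge : Real.cos (π / m) ≤ Real.cos (φ - θ) := by
    rw [← Real.cos_abs (φ - θ)]
    apply Real.cos_le_cos_of_nonneg_of_le_pi (abs_nonneg _) (by linarith) habs
  have hcospos : 0 < Real.cos (π / m) := by
    apply Real.cos_pos_of_mem_Ioo
    constructor
    · linarith [div_nonneg hπ.le hm0.le]
    · linarith
  -- apply the hypothesis
  have hk' := hpoly k (Finset.mem_range.mpr hkm)
  rw [hcosk, hsink, hxρ, hyρ] at hk'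
  have hdot : ρ * Real.cos φ * Real.cos θ + ρ * Real.sin φ * Real.sin θ
      = ρ * Real.cos (φ - θ) := by
    rw [Real.cos_sub]; ring
  rw [hdot] at hk'
  have hρr : ρ * Real.cos (π / m) ≤ r * Real.cos (π / m) := by
    calc ρ * Real.cos (π / m) ≤ ρ * Real.cos (φ - θ) :=
          mul_le_mul_of_nonneg_left hcos_ge hρ0.le
      _ ≤ r * Real.cos (π / m) := hk'
  have hρle : ρ ≤ r := le_of_mul_le_mul_right (by linarith [hρr]) hcospos
  have hsq : x ^ 2 + y ^ 2 = ρ ^ 2 := by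
    rw [hρ, Complex.sq_norm, Complex.normSq_apply]
    simp [hz]
    ring
  rw [hsq]
  exact pow_le_pow_left₀ hρ0.le hρle 2
end
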